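/- For every integer n ≥ 1, the polynomial Δ_n(t) = t^4 + n t^3 − (2n+1) t^2 + n t + 1 has exactly two real roots, both of which are negative. -/

import Mathlib

/-!
Δ_n is palindromic: with s = t + 1/t, Δ_n(t) / t² = s² + n s - (2n + 3), so Δ_n factors as
(t² + u t + 1)(t² + v t + 1) with u, v = (n ∓ √((n + 2)(n + 6))) / 2. Since |u| < 2 < v, the
first factor has no real root and the second has two distinct ones. They are negative because
Δ_n(t) = (t² - 1/2)² + 3/4 + n t (t - 1)² > 0 for t ≥ 0.
-/

open Polynomial

theorem roots_quadratic_eq_zero_of_sq_lt {p q : ℝ} (h : p ^ 2 < 4 * q) :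
    (X ^ 2 + C p * X + C q).roots = 0 := by
  refine Multiset.eq_zero_of_forall_notMem fun x hx => ?_
  have hroot : x ^ 2 + p * x + q = 0 := by simpa using (mem_roots'.mp hx).2
  nlinarith [sq_nonneg (2 * x + p)]

theorem quadratic_eq_mul_X_sub_C {p q : ℝ} (h : 4 * q < p ^ 2) :
    X ^ 2 + C p * X + C q =
      (X - C ((-p + √(p ^ 2 - 4 * q)) / 2)) * (X - C ((-p - √(p ^ 2 - 4 * q)) / 2)) := by
  have he : √(p ^ 2 - 4 * q) ^ 2 = p ^ 2 - 4 * q := Real.sq_sqrt (by linarith)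
  set e := √(p ^ 2 - 4 * q)
  have hsum : (-p + e) / 2 + (-p - e) / 2 = -p := by ring
  have hprod : (-p + e) / 2 * ((-p - e) / 2) = q := by linear_combination (-1 / 4 : ℝ) * he
  calc X ^ 2 + C p * X + C q
      = X ^ 2 - C ((-p + e) / 2 + (-p - e) / 2) * X + C ((-p + e) / 2 * ((-p - e) / 2)) := by
        rw [hsum, hprod, map_neg]; ring
    _ = _ := by simp only [map_add, map_mul]; ring

theorem card_roots_quadratic_of_lt_sq {p q : ℝ} (h : 4 * q < p ^ 2) :
    (X ^ 2 + C p * X + C q).roots.card = 2 := by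
  rw [quadratic_eq_mul_X_sub_C h, roots_mul (mul_ne_zero (X_sub_C_ne_zero _) (X_sub_C_ne_zero _)),
    roots_X_sub_C, roots_X_sub_C]
  rfl

noncomputable def delta (N : ℝ) : ℝ[X] :=
  X ^ 4 + C N * X ^ 3 - C (2 * N + 1) * X ^ 2 + C N * X + 1

theorem eval_delta_pos {N x : ℝ} (hN : 0 ≤ N) (hx : 0 ≤ x) : 0 < (delta N).eval x := by
  have h : (delta N).eval x = (x ^ 2 - 1 / 2) ^ 2 + 3 / 4 + N * x * (x - 1) ^ 2 := by
    simp only [delta, eval_add, eval_sub, eval_mul, eval_pow, eval_C, eval_X, eval_one]; ring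
  rw [h]
  positivity

theorem delta_eq_mul {N : ℝ} (hN : -2 ≤ N) :
    delta N = (X ^ 2 + C ((N - √((N + 2) * (N + 6))) / 2) * X + C 1) *
      (X ^ 2 + C ((N + √((N + 2) * (N + 6))) / 2) * X + C 1) := by
  have hd : √((N + 2) * (N + 6)) ^ 2 = (N + 2) * (N + 6) := Real.sq_sqrt (by nlinarith)
  set d := √((N + 2) * (N + 6))
  have hsum : (N - d) / 2 + (N + d) / 2 = N := by ring
  have hprod : (N - d) / 2 * ((N + d) / 2) + 2 = -(2 * N + 1) := by
    linear_combination (-1 / 4 : ℝ) * hd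
  calc delta N
      = X ^ 4 + C ((N - d) / 2 + (N + d) / 2) * X ^ 3 + C ((N - d) / 2 * ((N + d) / 2) + 2) * X ^ 2
          + C ((N - d) / 2 + (N + d) / 2) * X + 1 := by
        rw [hsum, hprod, map_neg, delta]; ring
    _ = _ := by simp only [map_add, map_mul, map_one, map_ofNat]; ring

theorem card_roots_delta {N : ℝ} (hN : 1 / 4 < N) : (delta N).roots.card = 2 := by
  have hd : √((N + 2) * (N + 6)) ^ 2 = (N + 2) * (N + 6) := Real.sq_sqrt (by nlinarith)
  have hd0 : 0 ≤ √((N + 2) * (N + 6)) := Real.sqrt_nonneg _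
  set d := √((N + 2) * (N + 6))
  have hd_lt : d < N + 4 := by nlinarith
  have hd_gt : N - 4 < d := by nlinarith
  have hd_gt' : 4 - N < d := by nlinarith
  have hu : ((N - d) / 2) ^ 2 < 4 * 1 := by nlinarith
  have hv : 4 * 1 < ((N + d) / 2) ^ 2 := by nlinarith
  have hfactors_ne : ∀ a : ℝ, X ^ 2 + C a * X + C 1 ≠ 0 := fun a h => by
    simpa using congrArg (eval 0) h
  rw [delta_eq_mul (by linarith), roots_mul (mul_ne_zero (hfactors_ne _) (hfactors_ne _)),
    roots_quadratic_eq_zero_of_sq_lt hu, zero_add, card_roots_quadratic_of_lt_sq hv]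

theorem neg_of_mem_roots_delta {N x : ℝ} (hN : 0 ≤ N) (hx : x ∈ (delta N).roots) : x < 0 := by
  by_contra! hx0
  exact (eval_delta_pos hN hx0).ne' (mem_roots'.mp hx).2

theorem delta_two_negative_real_roots (n : ℤ) (hn : 1 ≤ n) :
    ((X ^ 4 + C (n : ℝ) * X ^ 3 - C (2 * (n : ℝ) + 1) * X ^ 2
        + C (n : ℝ) * X + 1 : Polynomial ℝ)).roots.card = 2 ∧
      ∀ x ∈ ((X ^ 4 + C (n : ℝ) * X ^ 3 - C (2 * (n : ℝ) + 1) * X ^ 2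
        + C (n : ℝ) * X + 1 : Polynomial ℝ)).roots, x < 0 := by
  have hN : (1 : ℝ) ≤ n := by exact_mod_cast hn
  exact ⟨card_roots_delta (by linarith), fun x => neg_of_mem_roots_delta (by linarith)⟩
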